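/- Let A, B ⊂ ℝⁿ be nonempty compact sets, ‖·‖ a norm, λ = max_{b∈B} min_{a∈conv(A)} ‖a+b‖, and define φ(x) = dist(x, −(n+1)·conv(A)). Then for every x ∈ ℝⁿ, min_{a∈A} max_{b∈B} φ(x+a+b) ≤ λ + φ(x). -/

import Mathlib

/-!
By Carathéodory, a point `c` of `conv A` in dimension `n` is a convex combination of at most
`n + 1` points of `A`, so one of them, `a`, carries weight at least `1 / (n + 1)`; peeling it
off gives the one-step Shapley–Folkman inclusion `(n + 1) • conv A ⊆ A + n • conv A`.

Given `x`, take `c ∈ -(n + 1) • conv A` and write `-c = a + n • d` with `a ∈ A`,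
`d ∈ conv A`. For `b ∈ B` and `a' ∈ conv A`, the point `-(n • d + a')` lies in
`-(n + 1) • conv A` by convexity, and `x + a + b + n • d + a' = (x - c) + (a' + b)`; so
`φ (x + a + b) ≤ ‖x - c‖ + ‖a' + b‖`. Minimising over `a'`, maximising over `b` and then
minimising over `c` gives the claim.
-/

open Pointwise Metric

section ShapleyFolkman

variable {𝕜 E : Type*} [Field 𝕜] [LinearOrder 𝕜] [IsStrictOrderedRing 𝕜]
  [AddCommGroup E] [Module 𝕜 E] [FiniteDimensional 𝕜 E]

theorem succ_smul_convexHull_subset_add_smul_convexHull {n : ℕ}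
    (hn : Module.finrank 𝕜 E ≤ n) (s : Set E) :
    ((n : 𝕜) + 1) • convexHull 𝕜 s ⊆ s + (n : 𝕜) • convexHull 𝕜 s := by
  rintro _ ⟨c, hc, rfl⟩
  rcases n.eq_zero_or_pos with rfl | hn_pos
  · have : Subsingleton E := Module.finrank_zero_iff.mp (Nat.le_zero.mp hn)
    obtain ⟨a, ha⟩ := convexHull_nonempty_iff.mp ⟨c, hc⟩
    exact ⟨a, ha, _, Set.smul_mem_smul_set hc, Subsingleton.elim _ _⟩
  classical
  obtain ⟨ι, _, z, w, hzs, hz_indep, hw_pos, hw_sum, rfl⟩ :=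
    eq_pos_convex_span_of_mem_convexHull hc
  have hcard : Fintype.card ι ≤ n + 1 := by
    have := Submodule.finrank_le (vectorSpan 𝕜 (Set.range z))
    have := hz_indep.card_le_finrank_succ
    omega
  have hι : (Finset.univ : Finset ι).Nonempty := by
    by_contra h
    simp [Finset.not_nonempty_iff_eq_empty.mp h] at hw_sum
  obtain ⟨i, -, hi_max⟩ := Finset.exists_max_image Finset.univ w hι
  have hwi : 1 ≤ ((n : 𝕜) + 1) * w i := by
    calc (1 : 𝕜) = ∑ j, w j := hw_sum.symm
      _ ≤ Fintype.card ι • w i := Finset.sum_le_card_nsmul _ _ _ hi_max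
      _ ≤ ((n : 𝕜) + 1) * w i := by
        rw [nsmul_eq_mul]
        exact mul_le_mul_of_nonneg_right (by exact_mod_cast hcard) (hw_pos i).le
  set u : ι → 𝕜 := fun j => ((n : 𝕜) + 1) * w j - if j = i then 1 else 0 with hu
  have hu_nonneg : ∀ j ∈ Finset.univ, 0 ≤ u j := by
    intro j _
    by_cases hj : j = i
    · simp only [hu, hj, if_true]; linarith
    · simp only [hu, hj, if_false, sub_zero]; exact mul_nonneg (by positivity) (hw_pos j).le
  have hu_sum : ∑ j, u j = n := by
    simp only [hu, Finset.sum_sub_distrib, ← Finset.mul_sum, hw_sum, Finset.sum_ite_eq',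
      Finset.mem_univ, if_true]
    ring
  have hd : Finset.univ.centerMass u z ∈ convexHull 𝕜 s :=
    Finset.univ.centerMass_mem_convexHull hu_nonneg (by rw [hu_sum]; exact_mod_cast hn_pos)
      fun j _ => hzs ⟨j, rfl⟩
  refine ⟨z i, hzs ⟨i, rfl⟩, _, Set.smul_mem_smul_set hd, ?_⟩
  rw [Finset.centerMass, hu_sum, smul_smul, mul_inv_cancel₀ (by positivity), one_smul]
  simp [hu, sub_smul, Finset.sum_sub_distrib, mul_smul, ← Finset.smul_sum, ite_smul]

end ShapleyFolkman

section Distance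

variable {E : Type*} [SeminormedAddCommGroup E]

theorem bddAbove_image_sInf_norm_add {K B : Set E} (hK : K.Nonempty)
    (hB : Bornology.IsBounded B) :
    BddAbove ((fun b => sInf ((fun a => ‖a + b‖) '' K)) '' B) := by
  obtain ⟨a₀, ha₀⟩ := hK
  obtain ⟨C, hC⟩ := hB.exists_norm_le
  refine ⟨‖a₀‖ + C, ?_⟩
  rintro _ ⟨b, hb, rfl⟩
  calc sInf ((fun a => ‖a + b‖) '' K)
      _ ≤ ‖a₀ + b‖ :=
        csInf_le ⟨0, by rintro _ ⟨a, -, rfl⟩; positivity⟩ (Set.mem_image_of_mem _ ha₀)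
      _ ≤ ‖a₀‖ + C := (norm_add_le _ _).trans (by linarith [hC b hb])

variable [NormedSpace ℝ E]

theorem Convex.infDist_add_add_neg_smul_le {K : Set E} (hK : Convex ℝ K) {t : ℝ} (ht : 0 ≤ t)
    {a c d : E} (hd : d ∈ K) (hc : -c = a + t • d) (x b : E) :
    infDist (x + a + b) (-((t + 1) • K)) ≤ dist x c + sInf ((fun a' => ‖a' + b‖) '' K) := by
  have key : ∀ a' ∈ K, infDist (x + a + b) (-((t + 1) • K)) ≤ dist x c + ‖a' + b‖ := by
    intro a' ha'
    have hmem : -(t • d + a') ∈ -((t + 1) • K) := by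
      rw [Set.neg_mem_neg, hK.add_smul ht zero_le_one, one_smul]
      exact Set.add_mem_add (Set.smul_mem_smul_set hd) ha'
    calc infDist (x + a + b) (-((t + 1) • K))
        _ ≤ dist (x + a + b) (-(t • d + a')) := infDist_le_dist_of_mem hmem
        _ = ‖(x - c) + (a' + b)‖ := by
          rw [dist_eq_norm, ← neg_neg c, hc]; congr 1; abel
        _ ≤ dist x c + ‖a' + b‖ := by rw [dist_eq_norm]; exact norm_add_le _ _
  rw [← sub_le_iff_le_add']
  exact le_csInf (Set.Nonempty.image _ ⟨d, hd⟩) fun _ ⟨a', ha', h⟩ =>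
    h ▸ sub_le_iff_le_add'.mpr (key a' ha')

end Distance

theorem distance_like_subeigenvector_vector_addition_general {E : Type*}
    [NormedAddCommGroup E] [NormedSpace ℝ E] [FiniteDimensional ℝ E]
    (n : ℕ) (hdim : Module.finrank ℝ E = n)
    (A B : Set E) (hAne : A.Nonempty)
    (hB : IsCompact B) (hBne : B.Nonempty)
    (lam : ℝ)
    (hlam : lam = sSup ((fun b => sInf ((fun a => ‖a + b‖) '' convexHull ℝ A)) '' B))
    (φ : E → ℝ)
    (hφ : ∀ x : E, φ x = Metric.infDist x (-(((n : ℝ) + 1) • convexHull ℝ A))) :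
    ∀ x : E, sInf ((fun a => sSup ((fun b => φ (x + a + b)) '' B)) '' A) ≤ lam + φ x := by
  obtain rfl := funext hφ
  intro x
  set K := convexHull ℝ A
  have hK : K.Nonempty := convexHull_nonempty_iff.mpr hAne
  rw [← sub_le_iff_le_add', le_infDist hK.smul_set.neg]
  intro c hc
  obtain ⟨a, ha, _, ⟨d, hd, rfl⟩, had⟩ :=
    succ_smul_convexHull_subset_add_smul_convexHull hdim.le A (Set.mem_neg.mp hc)
  rw [sub_le_iff_le_add']
  refine (csInf_le ⟨0, ?_⟩ (Set.mem_image_of_mem _ ha)).trans (csSup_le (hBne.image _) ?_)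
  · rintro _ ⟨a', -, rfl⟩
    exact Real.sSup_nonneg fun _ ⟨_, _, h⟩ => h ▸ infDist_nonneg
  rintro _ ⟨b, hb, rfl⟩
  calc infDist (x + a + b) (-(((n : ℝ) + 1) • K))
      _ ≤ dist x c + sInf ((fun a' => ‖a' + b‖) '' K) :=
        (convex_convexHull ℝ A).infDist_add_add_neg_smul_le n.cast_nonneg hd had.symm x b
      _ ≤ lam + dist x c := by
        rw [add_comm, hlam]
        gcongr
        exact le_csSup (bddAbove_image_sInf_norm_add hK hB.isBounded) (Set.mem_image_of_mem _ hb)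

/-- Let `A, B` be nonempty compact subsets of an `n`-dimensional real normed
space, `λ = max_{b∈B} min_{a∈conv A} ‖a+b‖` and `φ(x) = dist(x, −(n+1)·conv(A))`. Then
for every `x`, `min_{a∈A} max_{b∈B} φ(x+a+b) ≤ λ + φ(x)`. -/
theorem distance_like_subeigenvector_vector_addition {E : Type*}
    [NormedAddCommGroup E] [NormedSpace ℝ E] [FiniteDimensional ℝ E]
    (n : ℕ) (hdim : Module.finrank ℝ E = n)
    (A B : Set E) (hA : IsCompact A) (hAne : A.Nonempty)
    (hB : IsCompact B) (hBne : B.Nonempty)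
    (lam : ℝ)
    (hlam : lam = sSup ((fun b => sInf ((fun a => ‖a + b‖) '' convexHull ℝ A)) '' B))
    (φ : E → ℝ)
    (hφ : ∀ x : E, φ x = Metric.infDist x (-(((n : ℝ) + 1) • convexHull ℝ A))) :
    ∀ x : E, sInf ((fun a => sSup ((fun b => φ (x + a + b)) '' B)) '' A) ≤ lam + φ x :=
  distance_like_subeigenvector_vector_addition_general n hdim A B hAne hB hBne lam hlam φ hφ
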